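/- arXiv:1811.05072 — 3 statements merged into one kernel-verified Lean document; each statement's English description precedes it below -/
import Mathlib

section
/- Let ε ∈ (0,1), δ ∈ (0,1), Δ > 0, and σ ≥ √(2·ln(1.25/δ))/ε. Then for any two real numbers a and b with |a − b| ≤ Δ, the Gaussian measures gaussianReal a ((Δσ)²) and gaussianReal b ((Δσ)²) are (ε,δ)-indistinguishable: for every measurable set S ⊆ ℝ, (gaussianReal a ((Δσ)²)) S ≤ exp(ε) · (gaussianReal b ((Δσ)²)) S + δ. (This is the Gaussian mechanism: a function f with L2-sensitivity Δ, perturbed by noise N(0, Δ²σ²), is (ε,δ)-differentially private.) -/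
open MeasureTheory ProbabilityTheory Real Set
open scoped NNReal ENNReal

/-!
The density of `N(a, v)` is `exp ℓ(x)` times that of `N(b, v)`, where the privacy loss is
`ℓ(x) = ((x - b)² - (x - a)²) / (2v)`. On `{ℓ ≤ ε}` the mass of `N(a, v)` is therefore at most
`exp ε` times that of `N(b, v)`. Writing `x = a ± Δσ z` with `z` standard normal, the rest `{ℓ > ε}`
lies in the tail `{z > σε - 1/(2σ)}`, and `L = √(2 log (1.25/δ)) ≤ σε ≤ σ` puts its threshold above
`L - 1/(2L)`. The tail beyond that point is at most `1.25 exp (-L²/2) = δ`: by the bound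
`P(Z > s) ≤ exp (-s²/2) / 2` for `s ≥ 0` when `L ≥ 1`, and by `P(Z > s) ≤ 1/2 + |s|/√(2π)` when
`L < 1`, where `δ = 1.25 exp (-L²/2) > 0.75` leaves plenty of room.
-/

/-- The privacy loss `log (gaussianPDFReal a v x / gaussianPDFReal b v x)`. -/
noncomputable def gaussianPrivacyLoss (a b : ℝ) (v : ℝ≥0) (x : ℝ) : ℝ :=
  ((x - b) ^ 2 - (x - a) ^ 2) / (2 * v)

lemma gaussianPDFReal_eq_exp_privacyLoss_mul (a b : ℝ) (v : ℝ≥0) (x : ℝ) :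
    gaussianPDFReal a v x = exp (gaussianPrivacyLoss a b v x) * gaussianPDFReal b v x := by
  simp only [gaussianPDFReal_def, gaussianPrivacyLoss]
  rw [mul_left_comm, ← exp_add]
  ring_nf

lemma gaussianReal_le_exp_mul_of_privacyLoss_le {a b ε : ℝ} {v : ℝ≥0} (hv : v ≠ 0) {T : Set ℝ}
    (hT : ∀ x ∈ T, gaussianPrivacyLoss a b v x ≤ ε) :
    gaussianReal a v T ≤ ENNReal.ofReal (exp ε) * gaussianReal b v T := by
  rw [gaussianReal_apply a hv, gaussianReal_apply b hv,
    ← lintegral_const_mul _ (measurable_gaussianPDF b v)]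
  refine setLIntegral_mono ((measurable_gaussianPDF b v).const_mul _) fun x hx => ?_
  rw [gaussianPDF, gaussianPDF, ← ENNReal.ofReal_mul (exp_nonneg ε),
    gaussianPDFReal_eq_exp_privacyLoss_mul a b]
  gcongr
  · exact gaussianPDFReal_nonneg b v x
  · exact hT x hx

lemma gaussianReal_le_exp_mul_add_privacyLoss_gt (a b ε : ℝ) {v : ℝ≥0} (hv : v ≠ 0) (S : Set ℝ) :
    gaussianReal a v S ≤ ENNReal.ofReal (exp ε) * gaussianReal b v S +
      gaussianReal a v {x | ε < gaussianPrivacyLoss a b v x} := by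
  let G := {x | gaussianPrivacyLoss a b v x ≤ ε}
  calc gaussianReal a v S ≤ gaussianReal a v (S ∩ G) + gaussianReal a v (S \ G) :=
        measure_le_inter_add_sdiff _ _ _
    _ ≤ _ := by
        gcongr
        · exact (gaussianReal_le_exp_mul_of_privacyLoss_le hv fun x hx => hx.2).trans
            (by gcongr; exact inter_subset_left)
        · exact fun x hx => show ε < _ from not_le.1 hx.2

lemma gaussianReal_Ioi_self_le_half (μ : ℝ) (v : ℝ≥0) : gaussianReal μ v (Ioi μ) ≤ 1 / 2 := by
  have hreflect : (gaussianReal μ v).map (2 * μ - ·) = gaussianReal μ v := by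
    rw [gaussianReal_map_const_sub]; ring_nf
  have hsymm : gaussianReal μ v (Iio μ) = gaussianReal μ v (Ioi μ) := by
    conv_rhs => rw [← hreflect, Measure.map_apply (by fun_prop) measurableSet_Ioi]
    congr 1
    ext x
    simp only [mem_Iio, mem_preimage, mem_Ioi]
    constructor <;> intro h <;> linarith
  have htotal : gaussianReal μ v (Ioi μ) + gaussianReal μ v (Iio μ) ≤ 1 := by
    rw [← measure_union Ioi_disjoint_Iio_same measurableSet_Iio]
    exact prob_le_one
  rw [ENNReal.le_div_iff_mul_le (by norm_num) (by norm_num), mul_two]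
  rwa [hsymm] at htotal

lemma gaussianPDFReal_le (μ : ℝ) (v : ℝ≥0) (x : ℝ) : gaussianPDFReal μ v x ≤ (√(2 * π * v))⁻¹ := by
  rw [gaussianPDFReal_def]
  refine mul_le_of_le_one_right (by positivity) (exp_le_one_iff.2 ?_)
  exact div_nonpos_of_nonpos_of_nonneg (by nlinarith [sq_nonneg (x - μ)]) (by positivity)

lemma gaussianReal_Ioi_le_half_add {v : ℝ≥0} (hv : v ≠ 0) (μ s : ℝ) :
    gaussianReal μ v (Ioi s) ≤ 1 / 2 + ENNReal.ofReal ((μ - s) / √(2 * π * v)) := by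
  have hpdf : ∀ x ∈ Ioc s μ, gaussianPDF μ v x ≤ ENNReal.ofReal (√(2 * π * v))⁻¹ :=
    fun x _ => ENNReal.ofReal_le_ofReal (gaussianPDFReal_le μ v x)
  have hcentre : gaussianReal μ v (Ioc s μ) ≤ ENNReal.ofReal ((μ - s) / √(2 * π * v)) :=
    calc gaussianReal μ v (Ioc s μ) ≤ ∫⁻ _ in Ioc s μ, ENNReal.ofReal (√(2 * π * v))⁻¹ := by
          rw [gaussianReal_apply μ hv]; exact setLIntegral_mono measurable_const hpdf
      _ = ENNReal.ofReal ((μ - s) / √(2 * π * v)) := by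
          rw [setLIntegral_const, Real.volume_Ioc, ← ENNReal.ofReal_mul (by positivity),
            div_eq_inv_mul]
  calc gaussianReal μ v (Ioi s) ≤ gaussianReal μ v (Ioc s μ ∪ Ioi μ) :=
        measure_mono fun x hx => (le_or_gt x μ).imp (fun h => ⟨hx, h⟩) id
    _ ≤ gaussianReal μ v (Ioc s μ) + gaussianReal μ v (Ioi μ) := measure_union_le _ _
    _ ≤ _ := by rw [add_comm]; gcongr; exact gaussianReal_Ioi_self_le_half μ v

lemma gaussianReal_Ioi_le_exp_div_two {s : ℝ} (hs : 0 ≤ s) :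
    gaussianReal 0 1 (Ioi s) ≤ ENNReal.ofReal (exp (-s ^ 2 / 2) / 2) := by
  have hloss : ∀ x ∈ Ioi s, gaussianPrivacyLoss 0 s 1 x ≤ -s ^ 2 / 2 := fun x hx => by
    simp only [gaussianPrivacyLoss, NNReal.coe_one]
    nlinarith [mul_nonneg hs (sub_nonneg.2 (le_of_lt (mem_Ioi.1 hx)))]
  calc gaussianReal 0 1 (Ioi s) ≤ ENNReal.ofReal (exp (-s ^ 2 / 2)) * gaussianReal s 1 (Ioi s) :=
        gaussianReal_le_exp_mul_of_privacyLoss_le one_ne_zero hloss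
    _ ≤ ENNReal.ofReal (exp (-s ^ 2 / 2)) * (1 / 2) := by
        gcongr; exact gaussianReal_Ioi_self_le_half s 1
    _ = ENNReal.ofReal (exp (-s ^ 2 / 2) / 2) := by
        rw [ENNReal.ofReal_div_of_pos two_pos, ENNReal.ofReal_ofNat, mul_one_div]

lemma gaussianReal_privacyLoss_gt_le {t : ℝ} (ht : 0 < t) (a b ε s : ℝ)
    (hs : s * (2 * t * |a - b|) + |a - b| ^ 2 ≤ 2 * t ^ 2 * ε) :
    gaussianReal a (t ^ 2).toNNReal {x | ε < gaussianPrivacyLoss a b (t ^ 2).toNNReal x} ≤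
      gaussianReal 0 1 (Ioi s) := by
  -- the sign of `c` is chosen so that the bad set pulls back to a right tail
  obtain ⟨c, hc2, hc⟩ : ∃ c : ℝ, c ^ 2 = t ^ 2 ∧ c * (a - b) = t * |a - b| := by
    rcases abs_cases (a - b) with ⟨h, _⟩ | ⟨h, _⟩
    · exact ⟨t, rfl, by rw [h]⟩
    · exact ⟨-t, by ring, by rw [h]; ring⟩
  have hmap : (gaussianReal 0 1).map (fun z => c * z + a) = gaussianReal a (t ^ 2).toNNReal := by
    rw [show (fun z => c * z + a) = (· + a) ∘ (c * ·) from rfl,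
      ← Measure.map_map (measurable_add_const a) (measurable_const_mul c),
      gaussianReal_map_const_mul, gaussianReal_map_add_const, mul_zero, zero_add, mul_one]
    congr
    simp [hc2, sq_nonneg]
  have hloss : Measurable (gaussianPrivacyLoss a b (t ^ 2).toNNReal) := by
    unfold gaussianPrivacyLoss; fun_prop
  rw [← hmap, Measure.map_apply (by fun_prop) (measurableSet_lt measurable_const hloss)]
  refine measure_mono fun z hz => ?_
  simp only [mem_preimage, mem_ofPred_eq, gaussianPrivacyLoss, Real.coe_toNNReal _ (sq_nonneg t),
    lt_div_iff₀ (by positivity : (0 : ℝ) < 2 * t ^ 2)] at hz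
  have hexpand : (c * z + a - b) ^ 2 - (c * z + a - a) ^ 2 = |a - b| ^ 2 + 2 * (t * |a - b|) * z := by
    rw [sq_abs, ← hc]; ring
  by_contra hzs
  have := mul_le_mul_of_nonneg_left (not_lt.1 hzs) (by positivity : 0 ≤ t * |a - b|)
  nlinarith

lemma gaussianReal_Ioi_sub_le_exp_of_one_le {L : ℝ} (hL : 1 ≤ L) :
    gaussianReal 0 1 (Ioi (L - 1 / (2 * L))) ≤ ENNReal.ofReal (exp (-L ^ 2 / 2)) := by
  have hinv : 1 / (2 * L) ≤ 1 / 2 := by gcongr; linarith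
  refine (gaussianReal_Ioi_le_exp_div_two (by linarith)).trans (ENNReal.ofReal_le_ofReal ?_)
  have hsq : L ^ 2 - 1 ≤ (L - 1 / (2 * L)) ^ 2 := by
    have : (L - 1 / (2 * L)) ^ 2 = L ^ 2 - 1 + (1 / (2 * L)) ^ 2 := by field_simp; ring
    nlinarith [sq_nonneg (1 / (2 * L))]
  have hexp_half : exp (1 / 2) ≤ 2 :=
    (exp_bound_div_one_sub_of_interval (by norm_num) (by norm_num)).trans_eq (by norm_num)
  calc exp (-(L - 1 / (2 * L)) ^ 2 / 2) / 2 ≤ exp (1 / 2 + -L ^ 2 / 2) / 2 := by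
        gcongr; linarith
    _ = exp (1 / 2) / 2 * exp (-L ^ 2 / 2) := by rw [exp_add]; ring
    _ ≤ exp (-L ^ 2 / 2) := mul_le_of_le_one_left (exp_nonneg _) (by linarith)

lemma gaussianReal_Ioi_sub_le_of_le_one {L : ℝ} (hL : 3 / 5 ≤ L) (hL1 : L ≤ 1) :
    gaussianReal 0 1 (Ioi (L - 1 / (2 * L))) ≤ ENNReal.ofReal (1.25 * exp (-L ^ 2 / 2)) := by
  refine (gaussianReal_Ioi_le_half_add one_ne_zero 0 _).trans ?_
  rw [NNReal.coe_one, mul_one, zero_sub]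
  have hsqrt : 2 ≤ √(2 * π) := (le_sqrt zero_le_two (by positivity)).2 (by nlinarith [pi_gt_three])
  have hgap : 1 / (2 * L) - L ≤ 1 / 4 := by
    have : 1 / (2 * L) ≤ L + 1 / 4 := by rw [div_le_iff₀ (by positivity)]; nlinarith
    linarith
  have hdiv : -(L - 1 / (2 * L)) / √(2 * π) ≤ 1 / 8 := by
    rw [div_le_iff₀ (by positivity)]; linarith
  have hexp : 1 / 2 ≤ exp (-L ^ 2 / 2) := by nlinarith [add_one_le_exp (-L ^ 2 / 2)]
  calc (1 / 2 : ℝ≥0∞) + ENNReal.ofReal (-(L - 1 / (2 * L)) / √(2 * π))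
      ≤ ENNReal.ofReal (1 / 2) + ENNReal.ofReal (1 / 8) := by
        gcongr
        rw [ENNReal.ofReal_div_of_pos two_pos]; simp
    _ = ENNReal.ofReal (1 / 2 + 1 / 8) := (ENNReal.ofReal_add (by norm_num) (by norm_num)).symm
    _ ≤ ENNReal.ofReal (1.25 * exp (-L ^ 2 / 2)) := ENNReal.ofReal_le_ofReal (by linarith)

lemma gaussianReal_Ioi_sub_le {L : ℝ} (hL : 3 / 5 ≤ L) :
    gaussianReal 0 1 (Ioi (L - 1 / (2 * L))) ≤ ENNReal.ofReal (1.25 * exp (-L ^ 2 / 2)) := by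
  rcases le_total 1 L with h | h
  · exact (gaussianReal_Ioi_sub_le_exp_of_one_le h).trans
      (ENNReal.ofReal_le_ofReal (by nlinarith [exp_pos (-L ^ 2 / 2)]))
  · exact gaussianReal_Ioi_sub_le_of_le_one hL h

lemma gaussianReal_Ioi_le_of_sqrt_log_le {δ s : ℝ} (hδ : 0 < δ) (hδ1 : δ < 1)
    (hs : √(2 * log (1.25 / δ)) - 1 / (2 * √(2 * log (1.25 / δ))) ≤ s) :
    gaussianReal 0 1 (Ioi s) ≤ ENNReal.ofReal δ := by
  set L := √(2 * log (1.25 / δ))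
  have hlog : 1 / 5 ≤ log (1.25 / δ) := by
    have := one_sub_inv_le_log_of_pos (x := 1.25 / δ) (by positivity)
    have hδ' : δ / 1.25 < 4 / 5 := by rw [div_lt_iff₀ (by norm_num)]; norm_num; linarith
    rw [inv_div] at this
    linarith
  have hL2 : L ^ 2 = 2 * log (1.25 / δ) := sq_sqrt (by linarith)
  have hL : 3 / 5 ≤ L := (le_sqrt (by norm_num) (by linarith)).2 (by linarith)
  have hδL : 1.25 * exp (-L ^ 2 / 2) = δ := by
    rw [hL2, show -(2 * log (1.25 / δ)) / 2 = -log (1.25 / δ) by ring, exp_neg,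
      exp_log (by positivity)]
    field_simp
  calc gaussianReal 0 1 (Ioi s) ≤ gaussianReal 0 1 (Ioi (L - 1 / (2 * L))) :=
        measure_mono (Ioi_subset_Ioi hs)
    _ ≤ ENNReal.ofReal δ := hδL ▸ gaussianReal_Ioi_sub_le hL

theorem gaussian_mechanism_dp_general
    (ε δ Δ σ : ℝ)
    (hε : 0 < ε) (hε1 : ε < 1)
    (hδ : 0 < δ) (hδ1 : δ < 1)
    (hΔ : 0 < Δ)
    (hσ : Real.sqrt (2 * Real.log (1.25 / δ)) / ε ≤ σ)
    (a b : ℝ) (hab : |a - b| ≤ Δ)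
    (S : Set ℝ) :
    gaussianReal a (((Δ * σ) ^ 2).toNNReal) S ≤
      ENNReal.ofReal (Real.exp ε) * gaussianReal b (((Δ * σ) ^ 2).toNNReal) S +
        ENNReal.ofReal δ := by
  set L := √(2 * log (1.25 / δ))
  have hL : 0 < L := sqrt_pos.2 (mul_pos two_pos (log_pos (by rw [lt_div_iff₀ hδ]; linarith)))
  have hLσε : L ≤ σ * ε := (div_le_iff₀ hε).1 hσ
  have hσ0 : 0 < σ := (div_pos hL hε).trans_le hσ
  have hLσ : L ≤ σ := hLσε.trans (mul_le_of_le_one_right hσ0.le hε1.le)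
  have hLs : L - 1 / (2 * L) ≤ σ * ε - 1 / (2 * σ) := by gcongr
  set s := σ * ε - 1 / (2 * σ)
  have hΔσ : 0 < Δ * σ := mul_pos hΔ hσ0
  have hcutoff : s * (2 * (Δ * σ) * |a - b|) + |a - b| ^ 2 ≤ 2 * (Δ * σ) ^ 2 * ε := by
    have hexpand : s * (2 * (Δ * σ) * |a - b|) = 2 * Δ * σ ^ 2 * ε * |a - b| - Δ * |a - b| := by
      simp only [s]; field_simp
    nlinarith [mul_nonneg (sub_nonneg.2 hab) (by positivity : 0 ≤ 2 * Δ * σ ^ 2 * ε + |a - b|)]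
  set v := ((Δ * σ) ^ 2).toNNReal
  have hv : v ≠ 0 := (Real.toNNReal_pos.2 (by positivity)).ne'
  calc gaussianReal a v S
      ≤ ENNReal.ofReal (exp ε) * gaussianReal b v S +
          gaussianReal a v {x | ε < gaussianPrivacyLoss a b v x} :=
        gaussianReal_le_exp_mul_add_privacyLoss_gt a b ε hv S
    _ ≤ ENNReal.ofReal (exp ε) * gaussianReal b v S + gaussianReal 0 1 (Ioi s) := by
        gcongr _ + ?_; exact gaussianReal_privacyLoss_gt_le hΔσ a b ε s hcutoff
    _ ≤ ENNReal.ofReal (exp ε) * gaussianReal b v S + ENNReal.ofReal δ := by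
        gcongr; exact gaussianReal_Ioi_le_of_sqrt_log_le hδ hδ1 hLs

theorem gaussian_mechanism_dp
    (ε δ Δ σ : ℝ)
    (hε : 0 < ε) (hε1 : ε < 1)
    (hδ : 0 < δ) (hδ1 : δ < 1)
    (hΔ : 0 < Δ)
    (hσ : Real.sqrt (2 * Real.log (1.25 / δ)) / ε ≤ σ)
    (a b : ℝ) (hab : |a - b| ≤ Δ)
    (S : Set ℝ) (hS : MeasurableSet S) :
    gaussianReal a (((Δ * σ) ^ 2).toNNReal) S ≤
      ENNReal.ofReal (Real.exp ε) * gaussianReal b (((Δ * σ) ^ 2).toNNReal) S +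
        ENNReal.ofReal δ :=
  gaussian_mechanism_dp_general ε δ Δ σ hε hε1 hδ hδ1 hΔ hσ a b hab S
end

section
/- Let σ > 0, let a, b be real numbers with Δ = a − b, let μ = gaussianReal a (σ²) and ν = gaussianReal b (σ²), and let λ ≥ 0 be a real number. Then the λ-th moment of the privacy loss equals exp(λ·(λ+1)·Δ²/(2σ²)); that is, ∫ ((dμ/dν)(x))^λ dμ(x) = exp(λ·(λ+1)·Δ²/(2σ²)), where dμ/dν is the Radon–Nikodym derivative of μ with respect to ν (equivalently, the ratio of their Gaussian densities). -/
/-! The likelihood ratio of two Gaussians of equal variance `v` is the exponential of an affine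
function of `x`, `((x - b) ^ 2 - (x - a) ^ 2) / (2 v) = (a - b) x / v - (a ^ 2 - b ^ 2) / (2 v)`.
Its `λ`-th power is therefore `exp (t x + c)` with `t = λ (a - b) / v`, and its expectation under
`N(a, v)` is `exp c` times the Gaussian moment generating function `exp (a t + v t ^ 2 / 2)`;
collecting terms gives `exp (λ (λ + 1) (a - b) ^ 2 / (2 v))`. -/

open MeasureTheory ProbabilityTheory Real

open scoped NNReal

namespace ProbabilityTheory

variable {a b : ℝ} {v : ℝ≥0}

lemma gaussianPDFReal_div_gaussianPDFReal (hv : v ≠ 0) (x : ℝ) :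
    gaussianPDFReal a v x / gaussianPDFReal b v x
      = exp (((x - b) ^ 2 - (x - a) ^ 2) / (2 * v)) := by
  have hc : (√(2 * π * v))⁻¹ ≠ 0 := by positivity
  rw [gaussianPDFReal, gaussianPDFReal, mul_div_mul_left _ _ hc, ← exp_sub]
  ring_nf

lemma rnDeriv_gaussianReal_gaussianReal (hv : v ≠ 0) :
    (gaussianReal a v).rnDeriv (gaussianReal b v)
      =ᵐ[volume] fun x ↦ ENNReal.ofReal (exp (((x - b) ^ 2 - (x - a) ^ 2) / (2 * v))) := by
  have h_right := Measure.rnDeriv_withDensity_right (gaussianReal a v) volume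
    (measurable_gaussianPDF b v).aemeasurable
    (ae_of_all _ fun x ↦ (gaussianPDF_pos b hv x).ne') (ae_of_all _ fun _ ↦ gaussianPDF_ne_top)
  rw [← gaussianReal_of_var_ne_zero b hv] at h_right
  filter_upwards [h_right, rnDeriv_gaussianReal a v] with x hx_right hx_left
  rw [hx_right, hx_left, ← gaussianPDFReal_div_gaussianPDFReal hv, gaussianPDF, gaussianPDF,
    ENNReal.ofReal_div_of_pos (gaussianPDFReal_pos b v x hv), ENNReal.div_eq_inv_mul]

lemma integral_rnDeriv_gaussianReal_rpow (hv : v ≠ 0) (lam : ℝ) :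
    ∫ x, ((gaussianReal a v).rnDeriv (gaussianReal b v) x).toReal ^ lam ∂gaussianReal a v
      = exp (lam * (lam + 1) * (a - b) ^ 2 / (2 * v)) := by
  have hv' : (v : ℝ) ≠ 0 := by exact_mod_cast hv
  have h_linear : ∀ᵐ x ∂gaussianReal a v,
      ((gaussianReal a v).rnDeriv (gaussianReal b v) x).toReal ^ lam
        = exp (lam * (a - b) / v * x) * exp (-(lam * (a ^ 2 - b ^ 2) / (2 * v))) := by
    filter_upwards [(gaussianReal_absolutelyContinuous a hv).ae_le
      (rnDeriv_gaussianReal_gaussianReal hv)] with x hx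
    rw [hx, ENNReal.toReal_ofReal (exp_nonneg _), ← exp_mul, ← exp_add]
    congr 1
    field_simp
    ring
  have h_mgf : ∫ x, exp (lam * (a - b) / v * x) ∂gaussianReal a v
      = exp (a * (lam * (a - b) / v) + v * (lam * (a - b) / v) ^ 2 / 2) :=
    mgf_gaussianReal (X := fun x ↦ x) Measure.map_id' _
  rw [integral_congr_ae h_linear, integral_mul_const, h_mgf, ← exp_add]
  congr 1
  field_simp
  ring

end ProbabilityTheory

theorem gaussian_privacy_loss_moment_general
    (σ a b Δ lam : ℝ) (hσ : 0 < σ) (hΔ : Δ = a - b) :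
    ∫ x, (((gaussianReal a ((σ ^ 2).toNNReal)).rnDeriv
        (gaussianReal b ((σ ^ 2).toNNReal)) x).toReal) ^ lam
        ∂(gaussianReal a ((σ ^ 2).toNNReal)) =
      Real.exp (lam * (lam + 1) * Δ ^ 2 / (2 * σ ^ 2)) := by
  have hσ2 : 0 < σ ^ 2 := by positivity
  rw [integral_rnDeriv_gaussianReal_rpow (by simpa using hσ.ne') lam,
    Real.coe_toNNReal _ hσ2.le, hΔ]

theorem gaussian_privacy_loss_moment
    (σ a b Δ lam : ℝ) (hσ : 0 < σ) (hΔ : Δ = a - b) (hlam : 0 ≤ lam) :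
    ∫ x, (((gaussianReal a ((σ ^ 2).toNNReal)).rnDeriv
        (gaussianReal b ((σ ^ 2).toNNReal)) x).toReal) ^ lam
        ∂(gaussianReal a ((σ ^ 2).toNNReal)) =
      Real.exp (lam * (lam + 1) * Δ ^ 2 / (2 * σ ^ 2)) :=
  gaussian_privacy_loss_moment_general σ a b Δ lam hσ hΔ
end

section
/- Tail bound from moments: let μ and ν be probability measures on a measurable space with μ ≪ ν, let λ > 0 and ε > 0, and suppose the λ-th moment of the privacy loss is finite with value exp(α), i.e. α = log ∫ ((dμ/dν)(x))^λ dμ(x). Then μ and ν are (ε, exp(α − λ·ε))-indistinguishable: for every measurable set S, μ(S) ≤ exp(ε)·ν(S) + exp(α − λ·ε). -/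
open MeasureTheory

theorem tail_bound_from_moments
    {Ω : Type*} [MeasurableSpace Ω]
    (μ ν : Measure Ω) [IsProbabilityMeasure μ] [IsProbabilityMeasure ν]
    (hμν : μ ≪ ν)
    (lam ε α : ℝ) (hlam : 0 < lam) (hε : 0 < ε)
    (hInt : Integrable (fun x => ((μ.rnDeriv ν x).toReal) ^ lam) μ)
    (hα : α = Real.log (∫ x, ((μ.rnDeriv ν x).toReal) ^ lam ∂μ)) :
    ∀ S : Set Ω, MeasurableSet S →
      μ S ≤ ENNReal.ofReal (Real.exp ε) * ν S +
        ENNReal.ofReal (Real.exp (α - lam * ε)) := by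
  intro S hS
  set f : Ω → ℝ := fun x => (μ.rnDeriv ν x).toReal with hf
  have hf_meas : Measurable f := (Measure.measurable_rnDeriv μ ν).ennreal_toReal
  set B : Set Ω := {x | Real.exp ε ≤ f x} with hBdef
  have hB : MeasurableSet B := measurableSet_le measurable_const hf_meas
  set I : ℝ := ∫ x, f x ^ lam ∂μ with hI
  -- Part 1 : on S \ B the density is bounded by exp ε
  have h1 : μ (S \ B) ≤ ENNReal.ofReal (Real.exp ε) * ν S := by
    have hlt : ∀ᵐ x ∂ν, μ.rnDeriv ν x < ⊤ := Measure.rnDeriv_lt_top μ ν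
    have hbound : ∀ᵐ x ∂(ν.restrict (S \ B)),
        μ.rnDeriv ν x ≤ ENNReal.ofReal (Real.exp ε) := by
      filter_upwards [ae_restrict_of_ae hlt, ae_restrict_mem (hS.diff hB)] with x hx hxm
      have hxf : f x < Real.exp ε := lt_of_not_ge hxm.2
      calc μ.rnDeriv ν x = ENNReal.ofReal (f x) := (ENNReal.ofReal_toReal hx.ne).symm
        _ ≤ ENNReal.ofReal (Real.exp ε) := ENNReal.ofReal_le_ofReal hxf.le
    calc μ (S \ B) = ∫⁻ x in S \ B, μ.rnDeriv ν x ∂ν :=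
          (Measure.setLIntegral_rnDeriv hμν _).symm
      _ ≤ ∫⁻ _ in S \ B, ENNReal.ofReal (Real.exp ε) ∂ν := lintegral_mono_ae hbound
      _ = ENNReal.ofReal (Real.exp ε) * ν (S \ B) := by
          rw [setLIntegral_const, mul_comm]
      _ ≤ ENNReal.ofReal (Real.exp ε) * ν S := by
          exact mul_le_mul_right (measure_mono Set.diff_subset) _
  -- Part 2 : Markov on B
  have h2 : μ (S ∩ B) ≤ ENNReal.ofReal (Real.exp (α - lam * ε)) := by
    have hsub : B ⊆ {x | Real.exp (ε * lam) ≤ f x ^ lam} := by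
      intro x hx
      have hx' : Real.exp ε ≤ f x := hx
      have : Real.exp ε ^ lam ≤ f x ^ lam :=
        Real.rpow_le_rpow (Real.exp_pos ε).le hx' hlam.le
      simpa [Real.exp_mul] using this
    have hfnn : 0 ≤ᵐ[μ] fun x => f x ^ lam :=
      ae_of_all _ fun x => Real.rpow_nonneg ENNReal.toReal_nonneg _
    have hmarkov := mul_meas_ge_le_integral_of_nonneg hfnn hInt (Real.exp (ε * lam))
    have hBm : (μ B).toReal ≤ (μ {x | Real.exp (ε * lam) ≤ f x ^ lam}).toReal := by
      exact ENNReal.toReal_mono (measure_ne_top _ _) (measure_mono hsub)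
    have hkey : Real.exp (ε * lam) * (μ B).toReal ≤ I := by
      calc Real.exp (ε * lam) * (μ B).toReal
          ≤ Real.exp (ε * lam) * (μ {x | Real.exp (ε * lam) ≤ f x ^ lam}).toReal := by
            exact mul_le_mul_of_nonneg_left hBm (Real.exp_pos _).le
        _ ≤ I := hmarkov
    have hIle : I ≤ Real.exp α := by
      rw [hα]; exact Real.le_exp_log I
    have htoReal : (μ B).toReal ≤ Real.exp (α - lam * ε) := by
      calc (μ B).toReal ≤ Real.exp α / Real.exp (ε * lam) := by
            rw [le_div_iff₀ (Real.exp_pos (ε * lam))]; linarith [hkey, hIle]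
        _ = Real.exp (α - lam * ε) := by
            rw [Real.exp_sub]; ring_nf
    calc μ (S ∩ B) ≤ μ B := measure_mono Set.inter_subset_right
      _ = ENNReal.ofReal ((μ B).toReal) := (ENNReal.ofReal_toReal (measure_ne_top _ _)).symm
      _ ≤ ENNReal.ofReal (Real.exp (α - lam * ε)) := ENNReal.ofReal_le_ofReal htoReal
  calc μ S = μ (S ∩ B) + μ (S \ B) := (measure_inter_add_diff S hB).symm
    _ ≤ ENNReal.ofReal (Real.exp (α - lam * ε)) + ENNReal.ofReal (Real.exp ε) * ν S :=
        add_le_add h2 h1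
    _ = ENNReal.ofReal (Real.exp ε) * ν S + ENNReal.ofReal (Real.exp (α - lam * ε)) :=
        add_comm _ _
end
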